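/- arXiv:math/0411314 — 6 statements merged into one kernel-verified Lean document; each statement's English description precedes it below -/
import Mathlib

section
/- Let 0 → U →f W →g V → 0 be a short exact sequence of finite-dimensional A-modules and X a finite-dimensional A-module. Then dim_k Hom_A(X, U⊕V) = dim_k Hom_A(X, W) if and only if every homomorphism X → V factors through g. -/
open Module

/-- For a short exact sequence `0 → U →f W →g V → 0` and a module `X`,
`dim Hom(X, U⊕V) = dim Hom(X, W)` iff every homomorphism `X → V` factors through `g`. -/
theorem stmt2 {k : Type} [Field k] {A : Type} [Ring A] [Algebra k A]
    {U W V X : Type}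
    [AddCommGroup U] [Module k U] [Module A U] [IsScalarTower k A U] [FiniteDimensional k U]
    [AddCommGroup W] [Module k W] [Module A W] [IsScalarTower k A W] [FiniteDimensional k W]
    [AddCommGroup V] [Module k V] [Module A V] [IsScalarTower k A V] [FiniteDimensional k V]
    [AddCommGroup X] [Module k X] [Module A X] [IsScalarTower k A X] [FiniteDimensional k X]
    (f : U →ₗ[A] W) (g : W →ₗ[A] V)
    (hf : Function.Injective f) (hg : Function.Surjective g) (hfg : Function.Exact f g) :
    finrank k (X →ₗ[A] U) + finrank k (X →ₗ[A] V) = finrank k (X →ₗ[A] W) ↔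
      ∀ h : X →ₗ[A] V, ∃ h' : X →ₗ[A] W, g.comp h' = h := by
  -- finite dimensionality of Hom spaces
  have fd : ∀ (M : Type) [AddCommGroup M] [Module k M] [Module A M] [IsScalarTower k A M]
      [FiniteDimensional k M], FiniteDimensional k (X →ₗ[A] M) := by
    intro M _ _ _ _ _
    exact FiniteDimensional.of_injective
      (LinearMap.restrictScalarsₗ k A X M k) (LinearMap.restrictScalars_injective k)
  have : FiniteDimensional k (X →ₗ[A] U) := fd U
  have : FiniteDimensional k (X →ₗ[A] V) := fd V
  have : FiniteDimensional k (X →ₗ[A] W) := fd W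
  -- the two composition maps
  let F : (X →ₗ[A] U) →ₗ[k] (X →ₗ[A] W) :=
    { toFun := fun h => f.comp h
      map_add' := fun a b => by ext x; simp
      map_smul' := fun c a => by ext x; simp }
  let G : (X →ₗ[A] W) →ₗ[k] (X →ₗ[A] V) :=
    { toFun := fun h => g.comp h
      map_add' := fun a b => by ext x; simp
      map_smul' := fun c a => by ext x; simp }
  have hFinj : Function.Injective F := by
    intro a b hab
    ext x
    exact hf (LinearMap.congr_fun hab x)
  have hker : LinearMap.ker G = LinearMap.range F := by
    ext h
    simp only [LinearMap.mem_ker, LinearMap.mem_range]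
    constructor
    · intro h0
      have hmem : ∀ x, h x ∈ LinearMap.range f := by
        intro x
        exact (hfg (h x)).mp (LinearMap.congr_fun h0 x)
      let e := LinearEquiv.ofInjective f hf
      refine ⟨e.symm.toLinearMap.comp (h.codRestrict (LinearMap.range f) hmem), ?_⟩
      ext x
      show f (e.symm ⟨h x, hmem x⟩) = h x
      exact congrArg Subtype.val (e.apply_symm_apply ⟨h x, hmem x⟩)
    · rintro ⟨h', rfl⟩
      ext x
      simpa [F, G] using (hfg (f (h' x))).mpr ⟨h' x, rfl⟩
  have hrn := LinearMap.finrank_range_add_finrank_ker (V := (X →ₗ[A] W)) G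
  rw [hker, LinearMap.finrank_range_of_inj hFinj] at hrn
  constructor
  · intro hdim h
    have : finrank k (LinearMap.range G) = finrank k (X →ₗ[A] V) := by omega
    have htop : LinearMap.range G = ⊤ := Submodule.eq_top_of_finrank_eq this
    obtain ⟨h', hh'⟩ := LinearMap.range_eq_top.mp htop h
    exact ⟨h', hh'⟩
  · intro hsurj
    have htop : LinearMap.range G = ⊤ := LinearMap.range_eq_top.mpr fun h => hsurj h
    rw [htop, finrank_top] at hrn
    omega
end

section
/- Let σ: 0 → U →f W →g V₁⊕V₂ → 0 be a short exact sequence of finite-dimensional A-modules such that dim_k Hom_A(W, V₁) = dim_k Hom_A(U⊕V₁⊕V₂, V₁). Then W decomposes as W = W₁ ⊕ W₂ with W₁ ≅ V₁, and there is a short exact sequence 0 → U →f' W₂ →g' V₂ → 0 in which f' is the component of f into W₂. -/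
open Module

/-- Let `σ: 0 → U →f W →g V₁⊕V₂ → 0` be a short exact sequence of
finite-dimensional `A`-modules with `δ'_σ(V₁) = [V₁, U⊕V₁⊕V₂] − [V₁, W] = 0`.
Then `W = W₁ ⊕ W₂` with `W₁ ≅ V₁`, and there is a short exact sequence
`0 → U →f' W₂ →g' V₂ → 0` where `f'` is the component of `f` into `W₂`
(the projection of `f` onto `W₂` along `W₁`). -/
theorem stmt5 {k : Type} [Field k] {A : Type} [Ring A] [Algebra k A]
    {U W V₁ V₂ : Type}
    [AddCommGroup U] [Module k U] [Module A U] [IsScalarTower k A U] [FiniteDimensional k U]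
    [AddCommGroup W] [Module k W] [Module A W] [IsScalarTower k A W] [FiniteDimensional k W]
    [AddCommGroup V₁] [Module k V₁] [Module A V₁] [IsScalarTower k A V₁] [FiniteDimensional k V₁]
    [AddCommGroup V₂] [Module k V₂] [Module A V₂] [IsScalarTower k A V₂] [FiniteDimensional k V₂]
    (f : U →ₗ[A] W) (g : W →ₗ[A] V₁ × V₂)
    (hf : Function.Injective f) (hg : Function.Surjective g) (hfg : Function.Exact f g)
    (hdim : finrank k (V₁ →ₗ[A] U) + finrank k (V₁ →ₗ[A] V₁) + finrank k (V₁ →ₗ[A] V₂)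
      = finrank k (V₁ →ₗ[A] W)) :
    ∃ (W₁ W₂ : Submodule A W) (h : IsCompl W₁ W₂),
      Nonempty (W₁ ≃ₗ[A] V₁) ∧
      ∃ g' : W₂ →ₗ[A] V₂,
        Function.Injective ((W₂.linearProjOfIsCompl W₁ h.symm).comp f) ∧
        Function.Surjective g' ∧
        Function.Exact ((W₂.linearProjOfIsCompl W₁ h.symm).comp f) g' := by
  classical
  have hkerg : LinearMap.ker g = LinearMap.range f := LinearMap.exact_iff.mp hfg
  have fdU : FiniteDimensional k (V₁ →ₗ[A] U) :=
    FiniteDimensional.of_injective (LinearMap.restrictScalarsₗ k A V₁ U k)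
      (LinearMap.restrictScalars_injective k)
  have fdW : FiniteDimensional k (V₁ →ₗ[A] W) :=
    FiniteDimensional.of_injective (LinearMap.restrictScalarsₗ k A V₁ W k)
      (LinearMap.restrictScalars_injective k)
  have fdP : FiniteDimensional k (V₁ →ₗ[A] V₁ × V₂) :=
    FiniteDimensional.of_injective (LinearMap.restrictScalarsₗ k A V₁ (V₁ × V₂) k)
      (LinearMap.restrictScalars_injective k)
  -- post-composition maps
  set Φ : (V₁ →ₗ[A] U) →ₗ[k] (V₁ →ₗ[A] W) :=
    { toFun := fun φ => f.comp φ
      map_add' := fun φ₁ φ₂ => by ext v; simp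
      map_smul' := fun c φ => by ext v; simp } with hΦ
  set Ψ : (V₁ →ₗ[A] W) →ₗ[k] (V₁ →ₗ[A] V₁ × V₂) :=
    { toFun := fun φ => g.comp φ
      map_add' := fun φ₁ φ₂ => by ext v <;> simp
      map_smul' := fun c φ => by ext v <;> simp } with hΨ
  have hΦinj : Function.Injective Φ := by
    intro φ₁ φ₂ h
    ext v
    exact hf (LinearMap.congr_fun h v)
  have hkerΨ : LinearMap.ker Ψ = LinearMap.range Φ := by
    ext φ
    simp only [LinearMap.mem_ker, LinearMap.mem_range]
    constructor
    · intro h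
      have hmem : ∀ v, φ v ∈ LinearMap.range f := by
        intro v
        rw [← hkerg, LinearMap.mem_ker]
        exact LinearMap.congr_fun h v
      refine ⟨(LinearEquiv.ofInjective f hf).symm.toLinearMap.comp
        (φ.codRestrict (LinearMap.range f) hmem), ?_⟩
      ext v
      simp [hΦ]
    · rintro ⟨ψ, rfl⟩
      have : g.comp (f.comp ψ) = 0 := by
        refine LinearMap.ext fun v => ?_
        rw [LinearMap.comp_apply, LinearMap.comp_apply, hfg.apply_apply_eq_zero]
        rfl
      exact this
  have hP : finrank k (V₁ →ₗ[A] V₁ × V₂)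
      = finrank k (V₁ →ₗ[A] V₁) + finrank k (V₁ →ₗ[A] V₂) := by
    rw [← Module.finrank_prod]
    exact (LinearEquiv.finrank_eq
      (LinearMap.prodEquiv k : ((V₁ →ₗ[A] V₁) × (V₁ →ₗ[A] V₂)) ≃ₗ[k] (V₁ →ₗ[A] V₁ × V₂))).symm
  have hrank := LinearMap.finrank_range_add_finrank_ker Ψ
  rw [hkerΨ, LinearMap.finrank_range_of_inj hΦinj] at hrank
  have hrangeΨ : LinearMap.range Ψ = ⊤ := by
    apply Submodule.eq_top_of_finrank_eq
    omega
  obtain ⟨s, hs⟩ : ∃ s : V₁ →ₗ[A] W, g.comp s = LinearMap.inl A V₁ V₂ :=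
    LinearMap.range_eq_top.mp hrangeΨ (LinearMap.inl A V₁ V₂)
  have hgs : ∀ v, g (s v) = (v, 0) := fun v => LinearMap.congr_fun hs v
  have hsinj : Function.Injective s := by
    intro v₁ v₂ h
    have h2 := congrArg g h
    rw [hgs, hgs] at h2
    exact ((Prod.mk.injEq _ _ _ _).mp h2).1
  set W₁ : Submodule A W := LinearMap.range s with hW₁
  set W₂ : Submodule A W := LinearMap.ker ((LinearMap.fst A V₁ V₂).comp g) with hW₂
  have hmemW₂ : ∀ w : W, w ∈ W₂ ↔ (g w).1 = 0 := fun w => Iff.rfl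
  have hc : IsCompl W₁ W₂ := by
    constructor
    · rw [Submodule.disjoint_def]
      intro w hw hmem
      obtain ⟨v, rfl⟩ := hw
      have h1 : (g (s v)).1 = 0 := (hmemW₂ _).mp hmem
      rw [hgs] at h1
      simp only at h1
      rw [h1, map_zero]
    · rw [codisjoint_iff, eq_top_iff]
      intro w _
      have hmem : w - s ((g w).1) ∈ W₂ := by
        rw [hmemW₂, map_sub, hgs]
        simp
      have hsum : w = s ((g w).1) + (w - s ((g w).1)) := by abel
      rw [hsum]
      exact Submodule.add_mem_sup ⟨(g w).1, rfl⟩ hmem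
  have hfW₂ : ∀ u, f u ∈ W₂ := by
    intro u
    rw [hmemW₂]
    simp [hfg.apply_apply_eq_zero u]
  have hproj : ∀ u, (W₂.linearProjOfIsCompl W₁ hc.symm) (f u) = ⟨f u, hfW₂ u⟩ :=
    fun u => Submodule.linearProjOfIsCompl_apply_left hc.symm ⟨f u, hfW₂ u⟩
  refine ⟨W₁, W₂, hc, ⟨(LinearEquiv.ofInjective s hsinj).symm⟩,
    (LinearMap.snd A V₁ V₂).comp (g.comp W₂.subtype), ?_, ?_, ?_⟩
  · intro u₁ u₂ hu
    rw [LinearMap.comp_apply, LinearMap.comp_apply, hproj u₁, hproj u₂] at hu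
    exact hf (congrArg Subtype.val hu)
  · intro v₂
    obtain ⟨w, hw⟩ := hg (0, v₂)
    have hwmem : w ∈ W₂ := by rw [hmemW₂, hw]
    exact ⟨⟨w, hwmem⟩, by simp [hw]⟩
  · rw [LinearMap.exact_iff]
    ext w₂
    simp only [LinearMap.mem_ker, LinearMap.mem_range]
    constructor
    · intro hker
      have hzero : g (w₂ : W) = 0 := by
        have h1 : (g (w₂ : W)).1 = 0 := (hmemW₂ _).mp w₂.2
        have h2 : (g (w₂ : W)).2 = 0 := hker
        exact Prod.ext h1 h2
      obtain ⟨u, hu⟩ := (hfg _).mp hzero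
      refine ⟨u, ?_⟩
      rw [LinearMap.comp_apply, hproj u]
      exact Subtype.ext hu
    · rintro ⟨u, rfl⟩
      have h3 : ((W₂.linearProjOfIsCompl W₁ hc.symm).comp f) u = ⟨f u, hfW₂ u⟩ := hproj u
      rw [h3]
      show (g (f u)).2 = 0
      simp [hfg.apply_apply_eq_zero u]
end

section
/- Let σ₁: 0 → U → M̃ →γ̃ X → 0 be a short exact sequence of finite-dimensional A-modules such that dim_k Hom_A(U⊕X, M̃) = dim_k Hom_A(M̃, M̃) and dim_k Hom_A(U, U⊕X) = dim_k Hom_A(U, M̃). Then dim_k Hom_A(U⊕X, X) = dim_k Hom_A(M̃, X), i.e. every homomorphism U → X factors through the inclusion U → M̃. -/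
open Module

set_option linter.unusedSectionVars false

section aux
variable {k : Type} [Field k] {A : Type} [Ring A] [Algebra k A]
variable {U M X Y : Type}
  [AddCommGroup U] [Module k U] [Module A U] [IsScalarTower k A U] [FiniteDimensional k U]
  [AddCommGroup M] [Module k M] [Module A M] [IsScalarTower k A M] [FiniteDimensional k M]
  [AddCommGroup X] [Module k X] [Module A X] [IsScalarTower k A X] [FiniteDimensional k X]
  [AddCommGroup Y] [Module k Y] [Module A Y] [IsScalarTower k A Y] [FiniteDimensional k Y]

noncomputable local instance fdHom : FiniteDimensional k (M →ₗ[A] Y) :=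
  FiniteDimensional.of_injective (LinearMap.restrictScalarsₗ k A M Y k)
    (LinearMap.restrictScalars_injective k)

/-- precomposition as a k-linear map -/
def preComp (ι : U →ₗ[A] M) : (M →ₗ[A] Y) →ₗ[k] (U →ₗ[A] Y) where
  toFun φ := φ.comp ι
  map_add' φ ψ := by ext; simp
  map_smul' c φ := by ext; simp

/-- postcomposition as a k-linear map -/
def postComp (γ : M →ₗ[A] X) : (Y →ₗ[A] M) →ₗ[k] (Y →ₗ[A] X) where
  toFun φ := γ.comp φ
  map_add' φ ψ := by ext; simp
  map_smul' c φ := by ext; simp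

lemma preComp_inj (γ : M →ₗ[A] X) (hγ : Function.Surjective γ) :
    Function.Injective (preComp (k := k) (Y := Y) γ) := by
  intro φ ψ h
  ext x
  obtain ⟨m, rfl⟩ := hγ x
  exact LinearMap.congr_fun h m

lemma postComp_inj (ι : U →ₗ[A] M) (hι : Function.Injective ι) :
    Function.Injective (postComp (k := k) (Y := Y) ι) := by
  intro φ ψ h
  ext y
  exact hι (LinearMap.congr_fun h y)

lemma ker_preComp (ι : U →ₗ[A] M) (γ : M →ₗ[A] X) (hγ : Function.Surjective γ)
    (hexact : Function.Exact ι γ) :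
    LinearMap.ker (preComp (k := k) (Y := Y) ι) = LinearMap.range (preComp (k := k) (Y := Y) γ) := by
  ext φ
  constructor
  · intro hφ
    have hφ' : φ.comp ι = 0 := hφ
    have hker : LinearMap.ker γ ≤ LinearMap.ker φ := by
      rw [LinearMap.exact_iff.mp hexact]
      rintro _ ⟨u, rfl⟩
      simpa using LinearMap.congr_fun hφ' u
    let e : (M ⧸ LinearMap.ker γ) ≃ₗ[A] X := γ.quotKerEquivOfSurjective hγ
    refine ⟨(Submodule.liftQ (LinearMap.ker γ) φ hker).comp e.symm.toLinearMap, ?_⟩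
    show ((Submodule.liftQ (LinearMap.ker γ) φ hker).comp e.symm.toLinearMap).comp γ = φ
    ext m
    have he : e.symm (γ m) = Submodule.Quotient.mk m := by
      apply e.injective
      simp [e, LinearMap.quotKerEquivOfSurjective]
    simp [he]
  · rintro ⟨ψ, rfl⟩
    show (ψ.comp γ).comp ι = 0
    ext u
    simp [hexact.apply_apply_eq_zero u]

lemma ker_postComp (ι : U →ₗ[A] M) (γ : M →ₗ[A] X) (hι : Function.Injective ι)
    (hexact : Function.Exact ι γ) :
    LinearMap.ker (postComp (k := k) (Y := Y) γ) = LinearMap.range (postComp (k := k) (Y := Y) ι) := by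
  ext φ
  constructor
  · intro hφ
    have hφ' : γ.comp φ = 0 := hφ
    have hrange : ∀ y, φ y ∈ LinearMap.range ι := by
      intro y
      rw [← LinearMap.exact_iff.mp hexact]
      simpa using LinearMap.congr_fun hφ' y
    let e : U ≃ₗ[A] LinearMap.range ι := LinearEquiv.ofInjective ι hι
    refine ⟨e.symm.toLinearMap.comp (φ.codRestrict (LinearMap.range ι) hrange), ?_⟩
    show ι.comp (e.symm.toLinearMap.comp (φ.codRestrict (LinearMap.range ι) hrange)) = φ
    ext y
    have : ι (e.symm ⟨φ y, hrange y⟩) = φ y := by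
      have := e.apply_symm_apply ⟨φ y, hrange y⟩
      exact congrArg Subtype.val this
    exact this
  · rintro ⟨ψ, rfl⟩
    show γ.comp (ι.comp ψ) = 0
    ext y
    simp [hexact.apply_apply_eq_zero (ψ y)]

lemma contra_count (ι : U →ₗ[A] M) (γ : M →ₗ[A] X) (hγ : Function.Surjective γ)
    (hexact : Function.Exact ι γ) :
    finrank k (M →ₗ[A] Y) =
      finrank k (X →ₗ[A] Y) + finrank k (LinearMap.range (preComp (k := k) (Y := Y) ι)) := by
  have h1 := LinearMap.finrank_range_add_finrank_ker (preComp (k := k) (Y := Y) ι)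
  rw [ker_preComp ι γ hγ hexact] at h1
  rw [← h1, LinearMap.finrank_range_of_inj (preComp_inj (k := k) (Y := Y) γ hγ)]
  ring

lemma co_count (ι : U →ₗ[A] M) (γ : M →ₗ[A] X) (hι : Function.Injective ι)
    (hexact : Function.Exact ι γ) :
    finrank k (Y →ₗ[A] M) =
      finrank k (Y →ₗ[A] U) + finrank k (LinearMap.range (postComp (k := k) (Y := Y) γ)) := by
  have h1 := LinearMap.finrank_range_add_finrank_ker (postComp (k := k) (Y := Y) γ)
  rw [ker_postComp ι γ hι hexact] at h1
  rw [← h1, LinearMap.finrank_range_of_inj (postComp_inj (k := k) (Y := Y) ι hι)]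
  ring

lemma contra_surj (ι : U →ₗ[A] M) (γ : M →ₗ[A] X) (hγ : Function.Surjective γ)
    (hexact : Function.Exact ι γ)
    (h : finrank k (U →ₗ[A] Y) + finrank k (X →ₗ[A] Y) = finrank k (M →ₗ[A] Y)) :
    Function.Surjective (preComp (k := k) (Y := Y) ι) := by
  rw [← LinearMap.range_eq_top]
  apply Submodule.eq_top_of_finrank_eq
  have := contra_count (k := k) (Y := Y) ι γ hγ hexact
  omega

lemma co_surj (ι : U →ₗ[A] M) (γ : M →ₗ[A] X) (hι : Function.Injective ι)
    (hexact : Function.Exact ι γ)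
    (h : finrank k (Y →ₗ[A] U) + finrank k (Y →ₗ[A] X) = finrank k (Y →ₗ[A] M)) :
    Function.Surjective (postComp (k := k) (Y := Y) γ) := by
  rw [← LinearMap.range_eq_top]
  apply Submodule.eq_top_of_finrank_eq
  have := co_count (k := k) (Y := Y) ι γ hι hexact
  omega

end aux

/-- Step 3 in the proof of Proposition 6.2: Let
`σ₁: 0 → U →ι M̃ →γ X → 0` be a short exact sequence of finite-dimensional `A`-modules with
`δ_{σ₁}(M̃) = 0` (i.e. `[U⊕X, M̃] = [M̃, M̃]`) and `δ'_{σ₁}(U) = 0`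
(i.e. `[U, U⊕X] = [U, M̃]`). Then `δ_{σ₁}(X) = 0`, i.e. `[U⊕X, X] = [M̃, X]`;
equivalently, every homomorphism `U → X` factors through `ι`. -/
theorem stmt7 {k : Type} [Field k] {A : Type} [Ring A] [Algebra k A]
    {U M X : Type}
    [AddCommGroup U] [Module k U] [Module A U] [IsScalarTower k A U] [FiniteDimensional k U]
    [AddCommGroup M] [Module k M] [Module A M] [IsScalarTower k A M] [FiniteDimensional k M]
    [AddCommGroup X] [Module k X] [Module A X] [IsScalarTower k A X] [FiniteDimensional k X]
    (ι : U →ₗ[A] M) (γ : M →ₗ[A] X)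
    (hι : Function.Injective ι) (hγ : Function.Surjective γ) (hexact : Function.Exact ι γ)
    (h1 : finrank k (U →ₗ[A] M) + finrank k (X →ₗ[A] M) = finrank k (M →ₗ[A] M))
    (h2 : finrank k (U →ₗ[A] U) + finrank k (U →ₗ[A] X) = finrank k (U →ₗ[A] M)) :
    (finrank k (U →ₗ[A] X) + finrank k (X →ₗ[A] X) = finrank k (M →ₗ[A] X)) ∧
    (∀ h : U →ₗ[A] X, ∃ h' : M →ₗ[A] X, h'.comp ι = h) := by
  have hres : Function.Surjective (preComp (k := k) (Y := M) ι) :=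
    contra_surj ι γ hγ hexact h1
  have hpost : Function.Surjective (postComp (k := k) (Y := U) γ) :=
    co_surj ι γ hι hexact h2
  have hfac : ∀ h : U →ₗ[A] X, ∃ h' : M →ₗ[A] X, h'.comp ι = h := by
    intro h
    obtain ⟨g, hg⟩ := hpost h
    obtain ⟨f, hf⟩ := hres g
    refine ⟨γ.comp f, ?_⟩
    have hg' : γ.comp g = h := hg
    have hf' : f.comp ι = g := hf
    rw [LinearMap.comp_assoc, hf', hg']
  refine ⟨?_, hfac⟩
  -- res_X surjective
  have hresX : Function.Surjective (preComp (k := k) (Y := X) ι) := by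
    intro h
    obtain ⟨h', hh'⟩ := hfac h
    exact ⟨h', hh'⟩
  have hc := contra_count (k := k) (Y := X) ι γ hγ hexact
  have : LinearMap.range (preComp (k := k) (Y := X) ι) = ⊤ :=
    LinearMap.range_eq_top.mpr hresX
  rw [this, finrank_top] at hc
  omega
end

section
/- Let σ: 0 → U →f W →g V → 0 and σ': 0 → X →α W' →β V → 0 be short exact sequences of A-modules fitting into a pushout diagram along a homomorphism h : U → X (i.e. there is h' : W → W' with α∘h = h'∘f and β∘h' = g). Then h factors through f if and only if the sequence σ' splits. -/
/-- Let `σ: 0 → U →f W →g V → 0` and `σ': 0 → X →α W' →β V → 0` be short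
exact sequences of `A`-modules fitting into a pushout diagram along `h : U → X`
(so `W'` is the pushout of `f` and `h`, with `h' : W → W'`, `α∘h = h'∘f`, `β∘h' = g`).
Then `h` factors through `f` iff the sequence `σ'` splits. -/
theorem stmt8 {A : Type} [Ring A]
    {U W V X W' : Type}
    [AddCommGroup U] [Module A U] [AddCommGroup W] [Module A W]
    [AddCommGroup V] [Module A V] [AddCommGroup X] [Module A X]
    [AddCommGroup W'] [Module A W']
    (f : U →ₗ[A] W) (g : W →ₗ[A] V)
    (hf : Function.Injective f) (hg : Function.Surjective g) (hfg : Function.Exact f g)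
    (α : X →ₗ[A] W') (β : W' →ₗ[A] V)
    (hα : Function.Injective α) (hβ : Function.Surjective β) (hαβ : Function.Exact α β)
    (h : U →ₗ[A] X) (h' : W →ₗ[A] W')
    (hsquare : α.comp h = h'.comp f)
    (htriangle : β.comp h' = g)
    -- `W'` is the pushout of `f` and `h`:
    (hpushout_surj : Function.Surjective (α.coprod h'))
    (hpushout_exact : Function.Exact (h.prod (-f)) (α.coprod h')) :
    (∃ t : W →ₗ[A] X, t.comp f = h) ↔ (∃ r : W' →ₗ[A] X, r.comp α = LinearMap.id) := by
  constructor
  · rintro ⟨t, ht⟩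
    set π := α.coprod h' with hπ
    set φ : (X × W) →ₗ[A] X := (LinearMap.fst A X W) + t.comp (LinearMap.snd A X W) with hφ
    have hker : LinearMap.ker π ≤ LinearMap.ker φ := by
      intro p hp
      have : π p = 0 := hp
      obtain ⟨u, hu⟩ := (hpushout_exact p).mp this
      have h1 : φ ((h.prod (-f)) u) = 0 := by
        simp only [hφ, LinearMap.prod_apply, LinearMap.add_apply, LinearMap.comp_apply,
          LinearMap.fst_apply, LinearMap.snd_apply, Function.prod, LinearMap.neg_apply]
        have := congrFun (congrArg (fun m => m.toFun) ht) u
        simp only [LinearMap.toFun_eq_coe] at this ⊢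
        rw [map_neg]
        simp [LinearMap.comp_apply] at this
        rw [this]
        abel
      rw [hu] at h1
      exact h1
    set e := π.quotKerEquivOfSurjective hpushout_surj with he
    refine ⟨(Submodule.liftQ (LinearMap.ker π) φ hker).comp (e.symm : W' →ₗ[A] _), ?_⟩
    ext x
    have hx : π (x, 0) = α x := by simp [hπ]
    have hex : e ((LinearMap.ker π).mkQ (x, 0)) = α x := by
      exact hx
    have : e.symm (α x) = (LinearMap.ker π).mkQ (x, 0) := by
      rw [← hex]; exact e.symm_apply_apply _
    simp [LinearMap.comp_apply, this, hφ]
  · rintro ⟨r, hr⟩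
    refine ⟨r.comp h', ?_⟩
    rw [LinearMap.comp_assoc, ← hsquare, ← LinearMap.comp_assoc, hr, LinearMap.id_comp]
end

section
/- Let 0 → M₁ →f' M₁⊕X'' →g' V → 0 be a short exact sequence of finite-dimensional A-modules with M₁ indecomposable, where f' = (α₁, α₂)ᵗ with α₁ ∈ End_A(M₁), and g' = (β₁, β₂). If α₁ = 0, then β₁ : M₁ → V is a split monomorphism (a section). -/
open Module

/-- Let `0 → M₁ →f' M₁⊕X'' →g' V → 0` be a short exact sequence of
finite-dimensional `A`-modules with `M₁` indecomposable, where `f' = (α₁, α₂)ᵗ` with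
`α₁ ∈ End_A(M₁)` and `g' = (β₁, β₂)`. If `α₁ = 0`, then `β₁ : M₁ → V` is a split
monomorphism (a section). -/
theorem stmt9 {k : Type} [Field k] {A : Type} [Ring A] [Algebra k A]
    {M₁ X V : Type}
    [AddCommGroup M₁] [Module k M₁] [Module A M₁] [IsScalarTower k A M₁]
    [FiniteDimensional k M₁]
    [AddCommGroup X] [Module k X] [Module A X] [IsScalarTower k A X] [FiniteDimensional k X]
    [AddCommGroup V] [Module k V] [Module A V] [IsScalarTower k A V] [FiniteDimensional k V]
    -- `M₁` is indecomposable: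
    (hM₁ : Nontrivial M₁)
    (hind : ∀ p q : Submodule A M₁, IsCompl p q → p = ⊥ ∨ p = ⊤)
    (α₁ : M₁ →ₗ[A] M₁) (α₂ : M₁ →ₗ[A] X) (β₁ : M₁ →ₗ[A] V) (β₂ : X →ₗ[A] V)
    (hinj : Function.Injective (α₁.prod α₂))
    (hsurj : Function.Surjective (β₁.coprod β₂))
    (hexact : Function.Exact (α₁.prod α₂) (β₁.coprod β₂))
    (hα₁ : α₁ = 0) :
    Function.Injective β₁ ∧ ∃ r : V →ₗ[A] M₁, r.comp β₁ = LinearMap.id := by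
  set g := β₁.coprod β₂ with hg
  have hker : ∀ x : M₁ × X, g x = 0 → x.1 = 0 := by
    intro x hx
    obtain ⟨m, hm⟩ := (hexact x).mp hx
    have : (α₁ m, α₂ m) = x := hm
    rw [← this]
    simp [hα₁]
  have hle : LinearMap.ker g ≤ LinearMap.ker (LinearMap.fst A M₁ X) := by
    intro x hx
    simpa using hker x hx
  let e := g.quotKerEquivOfSurjective hsurj
  let r : V →ₗ[A] M₁ :=
    ((LinearMap.ker g).liftQ (LinearMap.fst A M₁ X) hle).comp (e.symm : V →ₗ[A] _)
  have key : ∀ m : M₁, r (β₁ m) = m := by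
    intro m
    have h1 : β₁ m = g (m, 0) := by simp [hg]
    have h2 : e.symm (β₁ m) = Submodule.Quotient.mk (m, 0) := by
      rw [h1]
      apply e.injective
      simp only [LinearEquiv.apply_symm_apply]
      rfl
    simp [r, h2]
  constructor
  · intro a b hab
    have := key a
    rw [hab, key b] at this
    exact this.symm
  · exact ⟨r, by ext m; exact key m⟩
end

section
/- Let A be the path algebra of a Dynkin quiver over an algebraically closed field k, and let Y be an indecomposable finite-dimensional A-module. Then End_A(Y) = k·1_Y, i.e. every endomorphism of Y is a scalar multiple of the identity. -/
open Module

namespace Stmt14Aux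

universe v

structure Rep (k Q₀ : Type) [Field k] [Quiver.{v} Q₀] : Type (max 1 v) where
  V : Q₀ → Type
  acg : ∀ i, AddCommGroup (V i)
  mod : ∀ i, Module k (V i)
  fd : ∀ i, FiniteDimensional k (V i)
  G : ∀ i j : Q₀, (i ⟶ j) → (V i →ₗ[k] V j)

attribute [instance] Rep.acg Rep.mod Rep.fd

variable {k Q₀ : Type} [Field k] [Quiver.{v} Q₀]

namespace Rep

/-- a morphism condition between two representations -/
def IsHom (X Y : Rep k Q₀) (η : ∀ i, X.V i →ₗ[k] Y.V i) : Prop :=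
  ∀ (i j : Q₀) (a : i ⟶ j), (η j).comp (X.G i j a) = (Y.G i j a).comp (η i)

def Comm (X : Rep k Q₀) (φ : ∀ i, X.V i →ₗ[k] X.V i) : Prop := IsHom X X φ

def Indec (X : Rep k Q₀) : Prop :=
  ∀ φ : ∀ i, X.V i →ₗ[k] X.V i, X.Comm φ → (∀ i, (φ i).comp (φ i) = φ i) →
    (∀ i, φ i = 0) ∨ (∀ i, φ i = LinearMap.id)

noncomputable def dim [Fintype Q₀] (X : Rep k Q₀) : ℕ := ∑ i, finrank k (X.V i)

lemma isHom_comp {X Y Z : Rep k Q₀} {η : ∀ i, X.V i →ₗ[k] Y.V i}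
    {ν : ∀ i, Y.V i →ₗ[k] Z.V i} (hη : IsHom X Y η) (hν : IsHom Y Z ν) :
    IsHom X Z (fun i => (ν i).comp (η i)) := by
  intro i j a
  rw [LinearMap.comp_assoc, hη i j a, ← LinearMap.comp_assoc, hν i j a,
    LinearMap.comp_assoc]

/-- subrepresentation on an invariant family of submodules -/
def sub (X : Rep k Q₀) (S : ∀ i, Submodule k (X.V i))
    (hS : ∀ (i j : Q₀) (a : i ⟶ j), ∀ x ∈ S i, X.G i j a x ∈ S j) : Rep k Q₀ where
  V i := ↥(S i)
  acg i := inferInstance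
  mod i := inferInstance
  fd i := inferInstance
  G i j a := (X.G i j a).restrict (hS i j a)

@[simp] lemma sub_G_coe (X : Rep k Q₀) (S : ∀ i, Submodule k (X.V i)) (hS) (i j : Q₀)
    (a : i ⟶ j) (x : ↥(S i)) : (((X.sub S hS).G i j a) x).1 = X.G i j a x.1 := rfl

lemma sub_dim_le [Fintype Q₀] (X : Rep k Q₀) (S : ∀ i, Submodule k (X.V i)) (hS) :
    (X.sub S hS).dim ≤ X.dim :=
  Finset.sum_le_sum fun i _ => Submodule.finrank_le (S i)

lemma comm_pow {X : Rep k Q₀} {ψ : ∀ i, X.V i →ₗ[k] X.V i} (hψ : X.Comm ψ) (N : ℕ) :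
    X.Comm (fun i => (ψ i) ^ N) := by
  induction N with
  | zero =>
    intro i j a
    simp only [pow_zero, Module.End.one_eq_id, LinearMap.id_comp, LinearMap.comp_id]
  | succ n ih =>
    intro i j a
    have h1 := ih i j a
    have h2 := hψ i j a
    simp only [pow_succ, Module.End.mul_eq_comp] at *
    calc (((ψ j) ^ n) ∘ₗ ψ j) ∘ₗ X.G i j a
        = ((ψ j) ^ n) ∘ₗ (ψ j ∘ₗ X.G i j a) := by rw [LinearMap.comp_assoc]
      _ = ((ψ j) ^ n) ∘ₗ (X.G i j a ∘ₗ ψ i) := by rw [h2]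
      _ = (((ψ j) ^ n) ∘ₗ X.G i j a) ∘ₗ ψ i := by rw [LinearMap.comp_assoc]
      _ = (X.G i j a ∘ₗ ((ψ i) ^ n)) ∘ₗ ψ i := by rw [h1]
      _ = X.G i j a ∘ₗ (((ψ i) ^ n) ∘ₗ ψ i) := by rw [LinearMap.comp_assoc]

/-- Fitting: a commuting endomorphism of an indecomposable representation is
nilpotent or injective at every vertex. -/
lemma nilp_or_inj [Fintype Q₀] (X : Rep k Q₀) (hind : X.Indec)
    (ψ : ∀ i, X.V i →ₗ[k] X.V i) (hψ : X.Comm ψ) :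
    (∃ N, ∀ i, (ψ i) ^ N = 0) ∨ (∀ i, Function.Injective (ψ i)) := by
  classical
  have hev : ∀ᶠ n in Filter.atTop, ∀ i,
      IsCompl (LinearMap.ker ((ψ i) ^ n)) (LinearMap.range ((ψ i) ^ n)) :=
    Filter.eventually_all.mpr fun i => (ψ i).eventually_isCompl_ker_pow_range_pow
  obtain ⟨N, hN1, hcompl⟩ : ∃ N, 1 ≤ N ∧ ∀ i,
      IsCompl (LinearMap.ker ((ψ i) ^ N)) (LinearMap.range ((ψ i) ^ N)) := by
    obtain ⟨N, h1, h2⟩ := ((Filter.eventually_ge_atTop 1).and hev).exists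
    exact ⟨N, h1, h2⟩
  set e : ∀ i, X.V i →ₗ[k] X.V i := fun i =>
    (LinearMap.range ((ψ i) ^ N)).subtype ∘ₗ
      Submodule.projectionOnto _ _ (hcompl i).symm with he
  have he1 : ∀ i x, x ∈ LinearMap.range ((ψ i) ^ N) → e i x = x := by
    intro i x hx
    simp only [he, LinearMap.comp_apply]
    rw [Submodule.projectionOnto_apply_of_mem_left (hcompl i).symm hx]
    rfl
  have he0 : ∀ i x, x ∈ LinearMap.ker ((ψ i) ^ N) → e i x = 0 := by
    intro i x hx
    simp only [he, LinearMap.comp_apply]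
    rw [Submodule.projectionOnto_apply_of_mem_right (hcompl i).symm hx]
    simp
  have hdec : ∀ i (x : X.V i), ∃ u ∈ LinearMap.ker ((ψ i) ^ N),
      ∃ v ∈ LinearMap.range ((ψ i) ^ N), u + v = x := fun i x =>
    by obtain ⟨u, v, hu, hv, h⟩ := Submodule.codisjoint_iff_exists_add_eq.mp (hcompl i).codisjoint x; exact ⟨u, hu, v, hv, h⟩
  have hcomm : X.Comm e := by
    intro i j a
    ext x
    obtain ⟨u, hu, v, hv, rfl⟩ := hdec i x
    have hpow := comm_pow hψ N i j a
    have hGu : X.G i j a u ∈ LinearMap.ker ((ψ j) ^ N) := by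
      rw [LinearMap.mem_ker]
      have : (((ψ j) ^ N) ∘ₗ X.G i j a) u = (X.G i j a ∘ₗ ((ψ i) ^ N)) u := by rw [hpow]
      simp only [LinearMap.comp_apply] at this
      rw [this, LinearMap.mem_ker.mp hu, map_zero]
    have hGv : X.G i j a v ∈ LinearMap.range ((ψ j) ^ N) := by
      obtain ⟨w, rfl⟩ := hv
      refine ⟨X.G i j a w, ?_⟩
      have : (((ψ j) ^ N) ∘ₗ X.G i j a) w = (X.G i j a ∘ₗ ((ψ i) ^ N)) w := by rw [hpow]
      simpa only [LinearMap.comp_apply] using this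
    simp only [LinearMap.comp_apply, map_add]
    rw [he0 i u hu, he1 i v hv, he0 j _ hGu, he1 j _ hGv, map_zero, zero_add]
  have hid : ∀ i, (e i).comp (e i) = e i := by
    intro i
    ext x
    obtain ⟨u, hu, v, hv, rfl⟩ := hdec i x
    simp only [LinearMap.comp_apply, map_add]
    rw [he0 i u hu, he1 i v hv, map_zero, zero_add, he1 i v hv, zero_add]
  rcases hind e hcomm hid with h0 | h1
  · left
    refine ⟨N, fun i => ?_⟩
    rw [← LinearMap.range_eq_bot]
    rw [Submodule.eq_bot_iff]
    intro v hv
    rw [← he1 i v hv, h0 i, LinearMap.zero_apply]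
  · right
    intro i
    rw [← LinearMap.ker_eq_bot]
    rw [Submodule.eq_bot_iff]
    intro x hx
    have hxN : x ∈ LinearMap.ker ((ψ i) ^ N) := by
      rw [LinearMap.mem_ker]
      obtain ⟨m, rfl⟩ := Nat.exists_eq_add_of_le hN1
      rw [add_comm, pow_succ, Module.End.mul_apply, LinearMap.mem_ker.mp hx, map_zero]
    have := he0 i x hxN
    rw [h1 i, LinearMap.id_apply] at this
    exact this

lemma isHom_apply {X Y : Rep k Q₀} {η : ∀ i, X.V i →ₗ[k] Y.V i} (h : IsHom X Y η)
    {i j : Q₀} (a : i ⟶ j) (x : X.V i) : η j (X.G i j a x) = Y.G i j a (η i x) := by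
  have := congrArg (fun f => f x) (h i j a); simpa using this

section Key

variable [Fintype Q₀] [∀ a b : Q₀, Fintype (a ⟶ b)]

/-- The map whose kernel is `End(Z)` and whose cokernel is `Ext¹(Z,Z)`. -/
noncomputable def Phi (Z : Rep k Q₀) :
    ((i : Q₀) → Z.V i →ₗ[k] Z.V i) →ₗ[k]
      ((i : Q₀) → (j : Q₀) → (i ⟶ j) → (Z.V i →ₗ[k] Z.V j)) where
  toFun ρ := fun i j a => (Z.G i j a) ∘ₗ (ρ i) - (ρ j) ∘ₗ (Z.G i j a)
  map_add' ρ ρ' := by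
    funext i j a
    ext z
    simp only [Pi.add_apply, LinearMap.sub_apply, LinearMap.comp_apply, LinearMap.add_apply,
      map_add]
    abel
  map_smul' m ρ := by
    funext i j a
    ext z
    simp only [Pi.smul_apply, LinearMap.sub_apply, LinearMap.comp_apply, LinearMap.smul_apply,
      map_smul, RingHom.id_apply, smul_sub]

lemma Phi_apply (Z : Rep k Q₀) (ρ : (i : Q₀) → Z.V i →ₗ[k] Z.V i) (i j : Q₀) (a : i ⟶ j) :
    Phi Z ρ i j a = (Z.G i j a) ∘ₗ (ρ i) - (ρ j) ∘ₗ (Z.G i j a) := rfl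

/-- The Euler form / dimension count: a nonzero representation of a quiver with positive
definite Tits form, all of whose commuting endomorphisms are scalar, admits no nonsplit
self-extension. -/
lemma brick_contradiction
    (hdynkin : ∀ d : Q₀ → ℤ, d ≠ 0 →
      0 < (∑ i : Q₀, d i ^ 2)
        - ∑ i : Q₀, ∑ j : Q₀, (Fintype.card (i ⟶ j) : ℤ) * d i * d j)
    (Z : Rep k Q₀) (i₂ : Q₀) (hZnt : Nontrivial (Z.V i₂))
    (hsc : ∀ ρ : ∀ i, Z.V i →ₗ[k] Z.V i, Z.Comm ρ → ∃ c : k, ∀ i, ρ i = c • LinearMap.id)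
    (ζ : (i : Q₀) → (j : Q₀) → (i ⟶ j) → (Z.V i →ₗ[k] Z.V j))
    (hζ : ζ ∉ LinearMap.range (Phi Z)) : False := by
  classical
  have hker : LinearMap.ker (Phi Z) ≤
      Submodule.span k {(fun _ => LinearMap.id : (i : Q₀) → Z.V i →ₗ[k] Z.V i)} := by
    intro ρ hρ
    have hρcomm : Z.Comm ρ := by
      intro i j a
      have h0 := congrFun (congrFun (congrFun (LinearMap.mem_ker.mp hρ) i) j) a
      have h1 : (Z.G i j a) ∘ₗ (ρ i) - (ρ j) ∘ₗ (Z.G i j a) = 0 := h0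
      rw [sub_eq_zero] at h1
      exact h1.symm
    obtain ⟨c, hc⟩ := hsc ρ hρcomm
    rw [Submodule.mem_span_singleton]
    exact ⟨c, funext fun i => (hc i).symm⟩
  have hk1 : finrank k (LinearMap.ker (Phi Z)) ≤ 1 := by
    refine le_trans (Submodule.finrank_mono hker) ?_
    by_cases h : (fun _ => LinearMap.id : (i : Q₀) → Z.V i →ₗ[k] Z.V i) = 0
    · rw [h, Submodule.span_zero_singleton, finrank_bot]
      omega
    · rw [finrank_span_singleton h]
  have hrange : finrank k (LinearMap.range (Phi Z)) <
      finrank k ((i : Q₀) → (j : Q₀) → (i ⟶ j) → (Z.V i →ₗ[k] Z.V j)) := by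
    apply Submodule.finrank_lt
    intro h
    exact hζ (h ▸ Submodule.mem_top)
  have hrn := LinearMap.finrank_range_add_finrank_ker (Phi Z)
  have hD : finrank k ((i : Q₀) → Z.V i →ₗ[k] Z.V i)
      = ∑ i, finrank k (Z.V i) * finrank k (Z.V i) := by
    rw [Module.finrank_pi_fintype]
    exact Finset.sum_congr rfl fun i _ => Module.finrank_linearMap k k (Z.V i) (Z.V i)
  have hC : finrank k ((i : Q₀) → (j : Q₀) → (i ⟶ j) → (Z.V i →ₗ[k] Z.V j))
      = ∑ i, ∑ j, Fintype.card (i ⟶ j) * (finrank k (Z.V i) * finrank k (Z.V j)) := by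
    rw [Module.finrank_pi_fintype]
    refine Finset.sum_congr rfl fun i _ => ?_
    rw [Module.finrank_pi_fintype]
    refine Finset.sum_congr rfl fun j _ => ?_
    rw [Module.finrank_pi_fintype, Finset.sum_const, Module.finrank_linearMap k k (Z.V i) (Z.V j), smul_eq_mul,
      Finset.card_univ]
  have hle : (∑ i, finrank k (Z.V i) * finrank k (Z.V i))
      ≤ ∑ i, ∑ j, Fintype.card (i ⟶ j) * (finrank k (Z.V i) * finrank k (Z.V j)) := by
    rw [← hD, ← hC, ← hrn]
    omega
  have hdne : (fun i => (finrank k (Z.V i) : ℤ)) ≠ 0 := by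
    intro h
    have h1 : (finrank k (Z.V i₂) : ℤ) = 0 := congrFun h i₂
    have h2 : 0 < finrank k (Z.V i₂) := Module.finrank_pos
    omega
  have hq := hdynkin _ hdne
  have hcast1 : ((∑ i, finrank k (Z.V i) * finrank k (Z.V i) : ℕ) : ℤ)
      = ∑ i : Q₀, ((finrank k (Z.V i) : ℤ)) ^ 2 := by
    push_cast
    exact Finset.sum_congr rfl fun i _ => by ring
  have hcast2 : ((∑ i, ∑ j, Fintype.card (i ⟶ j) * (finrank k (Z.V i) * finrank k (Z.V j)) : ℕ) : ℤ)
      = ∑ i : Q₀, ∑ j : Q₀, (Fintype.card (i ⟶ j) : ℤ) * (finrank k (Z.V i) : ℤ)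
          * (finrank k (Z.V j) : ℤ) := by
    push_cast
    exact Finset.sum_congr rfl fun i _ => Finset.sum_congr rfl fun j _ => by ring
  have hle' : (((∑ i, finrank k (Z.V i) * finrank k (Z.V i) : ℕ)) : ℤ)
      ≤ ((∑ i, ∑ j, Fintype.card (i ⟶ j) * (finrank k (Z.V i) * finrank k (Z.V j)) : ℕ) : ℤ) :=
    Int.ofNat_le.mpr hle
  rw [hcast1, hcast2] at hle'
  linarith

variable [IsAlgClosed k]

set_option maxHeartbeats 3000000 in
lemma key
    (hdynkin : ∀ d : Q₀ → ℤ, d ≠ 0 →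
      0 < (∑ i : Q₀, d i ^ 2)
        - ∑ i : Q₀, ∑ j : Q₀, (Fintype.card (i ⟶ j) : ℤ) * d i * d j)
    (n : ℕ) :
    ∀ X : Rep k Q₀, X.dim ≤ n → X.Indec →
      ∀ φ : ∀ i, X.V i →ₗ[k] X.V i, X.Comm φ →
        ∃ c : k, ∀ i, φ i = c • LinearMap.id := by
  induction n using Nat.strong_induction_on with
  | _ n ih =>
  intro X hXdim hind φ hφ
  classical
  by_cases hnt : ∃ i, Nontrivial (X.V i)
  case neg =>
    refine ⟨0, fun i => ?_⟩
    have : Subsingleton (X.V i) := not_nontrivial_iff_subsingleton.mp fun h => hnt ⟨i, h⟩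
    ext x
    exact Subsingleton.elim _ _
  obtain ⟨i₀, hnt₀⟩ := hnt
  obtain ⟨c, hc⟩ := Module.End.exists_eigenvalue (φ i₀)
  set ψ : ∀ i, X.V i →ₗ[k] X.V i := fun i => φ i - c • LinearMap.id with hψdef
  have hψcomm : X.Comm ψ := by
    intro i j a
    ext x
    simp only [hψdef, LinearMap.comp_apply, LinearMap.sub_apply, LinearMap.smul_apply,
      LinearMap.id_apply, map_sub, map_smul]
    rw [isHom_apply hφ a x]
  suffices hzero : ∀ i, ψ i = 0 by
    refine ⟨c, fun i => ?_⟩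
    have := hzero i
    rw [hψdef] at this
    simpa [sub_eq_zero] using this
  by_contra hne
  push_neg at hne
  obtain ⟨iψ, hiψ⟩ := hne
  -- ψ is nilpotent
  obtain ⟨N, hN⟩ : ∃ N, ∀ i, (ψ i) ^ N = 0 := by
    rcases nilp_or_inj X hind ψ hψcomm with h | hinj
    · exact h
    · exfalso
      obtain ⟨v, hv⟩ := hc.exists_hasEigenvector
      have h1 : ψ i₀ v = 0 := by
        simp only [hψdef, LinearMap.sub_apply, LinearMap.smul_apply, LinearMap.id_apply]
        rw [hv.apply_eq_smul, sub_self]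
      have := hinj i₀ (by rw [h1, map_zero] : ψ i₀ v = ψ i₀ 0)
      exact hv.right this
  -- construct a square-zero nonzero commuting endomorphism
  have hGood : ∃ θ₀ : ∀ i, X.V i →ₗ[k] X.V i, X.Comm θ₀ ∧
      (∀ i, (θ₀ i) ∘ₗ (θ₀ i) = 0) ∧ (∃ i, θ₀ i ≠ 0) := by
    have hex : ∃ m, ∀ i, (ψ i) ^ m = 0 := ⟨N, hN⟩
    set m₀ := Nat.find hex with hm₀def
    have hm₀ : ∀ i, (ψ i) ^ m₀ = 0 := Nat.find_spec hex
    have hm₀ne0 : m₀ ≠ 0 := by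
      intro h
      obtain ⟨x₀, hx₀⟩ := exists_ne (0 : X.V i₀)
      apply hx₀
      have h1 : (ψ i₀) ^ (0 : ℕ) = 0 := h ▸ hm₀ i₀
      rw [pow_zero] at h1
      calc x₀ = (1 : X.V i₀ →ₗ[k] X.V i₀) x₀ := rfl
        _ = (0 : X.V i₀ →ₗ[k] X.V i₀) x₀ := by rw [h1]
        _ = 0 := rfl
    have hm₀ne1 : m₀ ≠ 1 := by
      intro h
      apply hiψ
      have h1 : (ψ iψ) ^ (1 : ℕ) = 0 := h ▸ hm₀ iψ
      rwa [pow_one] at h1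
    have hm₀2 : 2 ≤ m₀ := by omega
    refine ⟨fun i => (ψ i) ^ (m₀ - 1), comm_pow hψcomm (m₀ - 1), fun i => ?_, ?_⟩
    · rw [← Module.End.mul_eq_comp, ← pow_add]
      have h2 : m₀ - 1 + (m₀ - 1) = (m₀ - 2) + m₀ := by omega
      rw [h2, pow_add, hm₀ i, mul_zero]
    · have hlt : m₀ - 1 < m₀ := by omega
      have := Nat.find_min hex hlt
      push_neg at this
      exact this
  -- choose a square-zero θ with minimal total rank
  let Q1 : ℕ → Prop := fun m => ∃ θ : ∀ i, X.V i →ₗ[k] X.V i, (X.Comm θ ∧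
      (∀ i, (θ i) ∘ₗ (θ i) = 0) ∧ (∃ i, θ i ≠ 0)) ∧
      ∑ i, finrank k (LinearMap.range (θ i)) = m
  have hQ1 : ∃ m, Q1 m := by
    obtain ⟨θ₀, h1, h2, h3⟩ := hGood
    exact ⟨_, θ₀, ⟨h1, h2, h3⟩, rfl⟩
  obtain ⟨θ, ⟨hθcomm, hθsq, hθne⟩, hθrank⟩ := Nat.find_spec hQ1
  have hθmin : ∀ θ' : ∀ i, X.V i →ₗ[k] X.V i, X.Comm θ' →
      (∀ i, (θ' i) ∘ₗ (θ' i) = 0) → (∃ i, θ' i ≠ 0) →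
      ∑ i, finrank k (LinearMap.range (θ i)) ≤ ∑ i, finrank k (LinearMap.range (θ' i)) := by
    intro θ' h1 h2 h3
    rw [hθrank]
    exact Nat.find_min' hQ1 ⟨θ', ⟨h1, h2, h3⟩, rfl⟩
  have hθsq' : ∀ i x, θ i (θ i x) = 0 := fun i x => by
    have := congrArg (fun f => f x) (hθsq i); simpa using this
  -- the kernel subrepresentation K
  set S : ∀ i, Submodule k (X.V i) := fun i => LinearMap.ker (θ i) with hSdef
  have hSinv : ∀ (i j : Q₀) (a : i ⟶ j), ∀ x ∈ S i, X.G i j a x ∈ S j := by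
    intro i j a x hx
    simp only [hSdef, LinearMap.mem_ker] at hx ⊢
    rw [isHom_apply hθcomm a x, hx, map_zero]
  set K : Rep k Q₀ := X.sub S hSinv with hKdef
  set θhat : ∀ i, X.V i →ₗ[k] K.V i :=
    fun i => (θ i).codRestrict (S i) (fun x => by
      simp only [hSdef, LinearMap.mem_ker]; exact hθsq' i x) with hθhatdef
  have hθhathom : IsHom X K θhat := by
    intro i j a
    ext x
    exact Subtype.ext (isHom_apply hθcomm a x)
  -- the range subrepresentation I
  set R : ∀ i, Submodule k (X.V i) := fun i => LinearMap.range (θ i) with hRdef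
  have hRinv : ∀ (i j : Q₀) (a : i ⟶ j), ∀ x ∈ R i, X.G i j a x ∈ R j := by
    rintro i j a x ⟨y, rfl⟩
    exact ⟨X.G i j a y, isHom_apply hθcomm a y⟩
  set Irep : Rep k Q₀ := X.sub R hRinv with hIdef
  set GI : ∀ (i j : Q₀) (a : i ⟶ j), ↥(R i) →ₗ[k] ↥(R j) := fun i j a => Irep.G i j a
    with hGIdef
  have hRS : ∀ i, R i ≤ S i := by
    rintro i x ⟨y, rfl⟩
    simp only [hSdef, LinearMap.mem_ker]
    exact hθsq' i y
  -- choose a minimal idempotent e on K hitting θhat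
  let Q2 : ℕ → Prop := fun m => ∃ e : ∀ i, K.V i →ₗ[k] K.V i, (K.Comm e ∧
      (∀ i, (e i) ∘ₗ (e i) = e i) ∧ (∃ i, (e i) ∘ₗ (θhat i) ≠ 0)) ∧
      ∑ i, finrank k (LinearMap.range (e i)) = m
  have hQ2 : ∃ m, Q2 m := by
    refine ⟨_, fun i => LinearMap.id, ⟨fun i j a => by simp, fun i => by simp, ?_⟩, rfl⟩
    obtain ⟨i, hi⟩ := hθne
    obtain ⟨x, hx⟩ : ∃ x, θ i x ≠ 0 := by
      by_contra h
      push_neg at h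
      exact hi (LinearMap.ext h)
    refine ⟨i, fun h => hx ?_⟩
    have h2 := LinearMap.ext_iff.mp h x
    have h3 : θhat i x = 0 := by simpa using h2
    exact congrArg Subtype.val h3
  obtain ⟨e, ⟨hecomm, heidem, hene⟩, herank⟩ := Nat.find_spec hQ2
  have hemin : ∀ e' : ∀ i, K.V i →ₗ[k] K.V i, K.Comm e' →
      (∀ i, (e' i) ∘ₗ (e' i) = e' i) → (∃ i, (e' i) ∘ₗ (θhat i) ≠ 0) →
      ∑ i, finrank k (LinearMap.range (e i)) ≤ ∑ i, finrank k (LinearMap.range (e' i)) := by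
    intro e' h1 h2 h3
    rw [herank]
    exact Nat.find_min' hQ2 ⟨e', ⟨h1, h2, h3⟩, rfl⟩
  have heidem' : ∀ i x, e i (e i x) = e i x := fun i x => by
    have := congrArg (fun f => f x) (heidem i); simpa using this
  -- the representation Z = image of e
  set T : ∀ i, Submodule k (K.V i) := fun i => LinearMap.range (e i) with hTdef
  have hTinv : ∀ (i j : Q₀) (a : i ⟶ j), ∀ x ∈ T i, K.G i j a x ∈ T j := by
    rintro i j a x ⟨y, rfl⟩
    exact ⟨K.G i j a y, isHom_apply hecomm a y⟩
  set Z : Rep k Q₀ := K.sub T hTinv with hZdef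
  set π : ∀ i, K.V i →ₗ[k] Z.V i :=
    fun i => (e i).codRestrict (T i) (fun x => LinearMap.mem_range_self _ x) with hπdef
  set ι : ∀ i, Z.V i →ₗ[k] K.V i := fun i => (T i).subtype with hιdef
  have hπι : ∀ i (z : Z.V i), π i (ι i z) = z := by
    intro i z
    refine Subtype.ext ?_
    obtain ⟨w, hw⟩ := z.2
    show e i z.1 = z.1
    rw [← hw, heidem' i w]
  have hπhom : IsHom K Z π := by
    intro i j a
    ext x
    exact Subtype.ext (isHom_apply hecomm a x)
  have hιhom : IsHom Z K ι := by
    intro i j a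
    ext z
    rfl
  -- Z is nonzero
  obtain ⟨i₂, hi₂⟩ := hene
  obtain ⟨x₂, hx₂⟩ : ∃ x, e i₂ (θhat i₂ x) ≠ 0 := by
    by_contra h
    push_neg at h
    refine hi₂ (LinearMap.ext fun x => ?_)
    exact h x
  have hZnt : Nontrivial (Z.V i₂) := by
    refine nontrivial_of_ne (π i₂ (θhat i₂ x₂)) 0 fun h => hx₂ ?_
    exact congrArg Subtype.val h
  -- Z has smaller dimension
  obtain ⟨iθ, hiθ⟩ := hθne
  have hZdim : Z.dim < n := by
    have h1 : Z.dim ≤ K.dim := K.sub_dim_le T hTinv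
    have h2 : K.dim < X.dim := by
      apply Finset.sum_lt_sum
      · intro i _
        exact Submodule.finrank_le (S i)
      · refine ⟨iθ, Finset.mem_univ _, ?_⟩
        apply Submodule.finrank_lt
        intro h
        exact hiθ (LinearMap.ker_eq_top.mp h)
    exact lt_of_le_of_lt h1 (lt_of_lt_of_le h2 hXdim)
  -- Z is indecomposable
  have hsubhom : IsHom K X (fun i => (S i).subtype) := by
    intro i j a
    ext x
    rfl
  have hZind : Z.Indec := by
    have hclaim : ∀ g : ∀ i, Z.V i →ₗ[k] Z.V i, Z.Comm g →
        (∀ i x, g i (g i x) = g i x) → (∃ i, g i ≠ LinearMap.id) →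
        (∃ i, ((ι i) ∘ₗ ((g i) ∘ₗ (π i))) ∘ₗ (θhat i) ≠ 0) → False := by
      intro g hgcomm hgidem ⟨i₁, hi₁⟩ hne'
      set e' : ∀ i, K.V i →ₗ[k] K.V i := fun i => (ι i) ∘ₗ ((g i) ∘ₗ (π i)) with he'def
      have he'comm : K.Comm e' := isHom_comp (isHom_comp hπhom hgcomm) hιhom
      have he'idem : ∀ i, (e' i) ∘ₗ (e' i) = e' i := by
        intro i
        ext x
        show ι i (g i (π i (ι i (g i (π i x))))) = ι i (g i (π i x))
        rw [hπι i (g i (π i x)), hgidem i (π i x)]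
      have hbound : ∀ i, finrank k (LinearMap.range (e' i)) ≤ finrank k (LinearMap.range (e i)) := by
        intro i
        have hb1 : finrank k (LinearMap.range (e' i)) ≤ finrank k (LinearMap.range (g i)) := by
          rw [he'def]
          have : LinearMap.range ((ι i) ∘ₗ ((g i) ∘ₗ (π i)))
              = Submodule.map (ι i) (LinearMap.range ((g i) ∘ₗ (π i))) := LinearMap.range_comp _ _
          rw [this]
          refine le_trans (Submodule.finrank_map_le _ _) ?_
          exact Submodule.finrank_mono (LinearMap.range_comp_le_range _ _)
        have hb2 : finrank k (LinearMap.range (g i)) ≤ finrank k (Z.V i) :=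
          (g i).finrank_range_le
        have hb3 : finrank k (Z.V i) = finrank k (LinearMap.range (e i)) := rfl
        omega
      have hstrict : finrank k (LinearMap.range (e' i₁)) < finrank k (LinearMap.range (e i₁)) := by
        have hb1 : finrank k (LinearMap.range (e' i₁)) ≤ finrank k (LinearMap.range (g i₁)) := by
          rw [he'def]
          have : LinearMap.range ((ι i₁) ∘ₗ ((g i₁) ∘ₗ (π i₁)))
              = Submodule.map (ι i₁) (LinearMap.range ((g i₁) ∘ₗ (π i₁))) := LinearMap.range_comp _ _
          rw [this]
          refine le_trans (Submodule.finrank_map_le _ _) ?_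
          exact Submodule.finrank_mono (LinearMap.range_comp_le_range _ _)
        have hb2 : finrank k (LinearMap.range (g i₁)) < finrank k (Z.V i₁) := by
          apply Submodule.finrank_lt
          intro htop
          apply hi₁
          ext z
          obtain ⟨w, hw⟩ := LinearMap.range_eq_top.mp htop z
          rw [LinearMap.id_apply, ← hw, hgidem i₁ w]
        have hb3 : finrank k (Z.V i₁) = finrank k (LinearMap.range (e i₁)) := rfl
        omega
      have hsum : ∑ i, finrank k (LinearMap.range (e' i)) < ∑ i, finrank k (LinearMap.range (e i)) :=
        Finset.sum_lt_sum (fun i _ => hbound i) ⟨i₁, Finset.mem_univ _, hstrict⟩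
      have := hemin e' he'comm he'idem hne'
      omega
    intro f hfcomm hfidem
    by_contra hcon
    push_neg at hcon
    obtain ⟨⟨if0, hf0⟩, ⟨if1, hf1⟩⟩ : (∃ i, f i ≠ 0) ∧ (∃ i, f i ≠ LinearMap.id) := by
      constructor
      · obtain ⟨i, hi⟩ := hcon.1
        exact ⟨i, hi⟩
      · obtain ⟨i, hi⟩ := hcon.2
        exact ⟨i, hi⟩
    have hfidem' : ∀ i x, f i (f i x) = f i x := fun i x => by
      have := congrArg (fun h => h x) (hfidem i); simpa using this
    by_cases hcase : ∃ i, ((ι i) ∘ₗ ((f i) ∘ₗ (π i))) ∘ₗ (θhat i) ≠ 0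
    · exact hclaim f hfcomm hfidem' ⟨if1, hf1⟩ hcase
    · push_neg at hcase
      set g : ∀ i, Z.V i →ₗ[k] Z.V i := fun i => LinearMap.id - f i with hgdef
      have hgcomm : Z.Comm g := by
        intro i j a
        ext z
        have h1 := isHom_apply hfcomm a z
        simp only [hgdef, LinearMap.comp_apply, LinearMap.sub_apply, LinearMap.id_apply, map_sub]
        rw [h1]
      have hgidem : ∀ i x, g i (g i x) = g i x := by
        intro i x
        simp only [hgdef, LinearMap.sub_apply, LinearMap.id_apply, map_sub]
        rw [hfidem' i x]
        abel
      have hgne : g if0 ≠ LinearMap.id := by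
        intro h
        apply hf0
        ext z
        have := LinearMap.ext_iff.mp h z
        simp only [hgdef, LinearMap.sub_apply, LinearMap.id_apply] at this
        have : f if0 z = 0 := by
          have h2 : z - f if0 z = z := this
          have := sub_eq_self.mp h2
          exact this
        simpa using this
      refine hclaim g hgcomm hgidem ⟨if0, hgne⟩ ⟨i₂, ?_⟩
      intro h
      apply hx₂
      have hzero := hcase i₂
      have h1 := LinearMap.ext_iff.mp h x₂
      have h2 := LinearMap.ext_iff.mp hzero x₂
      simp only [LinearMap.comp_apply, LinearMap.zero_apply] at h1 h2
      -- h1 : ι (g (π (θhat x₂))) = 0, h2 : ι (f (π (θhat x₂))) = 0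
      have h3 : ι i₂ (g i₂ (π i₂ (θhat i₂ x₂))) + ι i₂ (f i₂ (π i₂ (θhat i₂ x₂)))
          = e i₂ (θhat i₂ x₂) := by
        rw [← map_add]
        have h4 : g i₂ (π i₂ (θhat i₂ x₂)) + f i₂ (π i₂ (θhat i₂ x₂)) = π i₂ (θhat i₂ x₂) := by
          simp only [hgdef, LinearMap.sub_apply, LinearMap.id_apply]
          abel
        rw [h4]
        rfl
      rw [h1, h2, add_zero] at h3
      exact h3.symm
  -- the map μ : I → Z is injective at every vertex
  set κ : ∀ i, ↥(R i) →ₗ[k] K.V i := fun i => Submodule.inclusion (hRS i) with hκdef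
  set μ : ∀ i, ↥(R i) →ₗ[k] Z.V i := fun i => (π i) ∘ₗ (κ i) with hμdef
  have hκhom : IsHom Irep K κ := by
    intro i j a
    ext x
    rfl
  have hμhom : IsHom Irep Z μ := isHom_comp hκhom hπhom
  set θtil : ∀ i, X.V i →ₗ[k] ↥(R i) := fun i => (θ i).rangeRestrict with hθtildef
  have hθtilhom : IsHom X Irep θtil := by
    intro i j a
    ext x
    exact Subtype.ext (isHom_apply hθcomm a x)
  have hμinj : ∀ i, Function.Injective (μ i) := by
    set A : ∀ i, Z.V i →ₗ[k] X.V i := fun i => ((S i).subtype) ∘ₗ (ι i) with hAdef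
    have hAhom : IsHom Z X A := isHom_comp hιhom hsubhom
    set θs : ∀ i, X.V i →ₗ[k] X.V i := fun i => (A i) ∘ₗ ((μ i) ∘ₗ (θtil i)) with hθsdef
    have hθscomm : X.Comm θs := isHom_comp (isHom_comp hθtilhom hμhom) hAhom
    have hmemS : ∀ i (x : X.V i), θs i x ∈ S i := fun i x => ((ι i) ((μ i) (θtil i x))).2
    have hθssq : ∀ i, (θs i) ∘ₗ (θs i) = 0 := by
      intro i
      ext x
      have h0 : θtil i (θs i x) = 0 := by
        refine Subtype.ext ?_
        show θ i (θs i x) = 0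
        exact LinearMap.mem_ker.mp (hmemS i x)
      show A i ((μ i) (θtil i (θs i x))) = 0
      rw [h0, map_zero, map_zero]
    have hθsne : ∃ i, θs i ≠ 0 := by
      refine ⟨i₂, fun h => hx₂ ?_⟩
      have h1 := LinearMap.ext_iff.mp h x₂
      have h2 : μ i₂ (θtil i₂ x₂) = π i₂ (θhat i₂ x₂) := by
        show π i₂ (κ i₂ (θtil i₂ x₂)) = π i₂ (θhat i₂ x₂)
        congr 1
      have h3 : A i₂ (μ i₂ (θtil i₂ x₂)) = 0 := h1
      rw [h2] at h3
      have h4 : (e i₂ (θhat i₂ x₂)).1 = 0 := h3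
      exact Subtype.ext h4
    have hsums := hθmin θs hθscomm hθssq hθsne
    have hperle : ∀ i, finrank k (LinearMap.range (θs i)) ≤ finrank k (LinearMap.range (μ i)) := by
      intro i
      have h5 : LinearMap.range ((A i) ∘ₗ ((μ i) ∘ₗ (θtil i)))
          = Submodule.map (A i) (LinearMap.range ((μ i) ∘ₗ (θtil i))) := LinearMap.range_comp _ _
      have h6 : finrank k (LinearMap.range (θs i))
          ≤ finrank k (LinearMap.range ((μ i) ∘ₗ (θtil i))) := by
        rw [hθsdef]
        rw [h5]
        exact Submodule.finrank_map_le _ _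
      refine le_trans h6 ?_
      exact Submodule.finrank_mono (LinearMap.range_comp_le_range _ _)
    have hperge : ∀ i, finrank k (LinearMap.range (μ i)) ≤ finrank k (LinearMap.range (θ i)) := by
      intro i
      exact (μ i).finrank_range_le
    have htot : ∑ i, finrank k (LinearMap.range (μ i)) = ∑ i, finrank k (LinearMap.range (θ i)) := by
      have h6 : ∑ i, finrank k (LinearMap.range (θ i)) ≤ ∑ i, finrank k (LinearMap.range (μ i)) :=
        le_trans hsums (Finset.sum_le_sum fun i _ => hperle i)
      have h7 : ∑ i, finrank k (LinearMap.range (μ i)) ≤ ∑ i, finrank k (LinearMap.range (θ i)) :=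
        Finset.sum_le_sum fun i _ => hperge i
      omega
    have hper : ∀ i, finrank k (LinearMap.range (μ i)) = finrank k (LinearMap.range (θ i)) := by
      intro i
      exact (Finset.sum_eq_sum_iff_of_le (fun i _ => hperge i)).mp htot i (Finset.mem_univ i)
    intro i
    rw [← LinearMap.ker_eq_bot]
    have h8 := LinearMap.finrank_range_add_finrank_ker (μ i)
    have h9 : finrank k ↥(R i) = finrank k (LinearMap.range (θ i)) := rfl
    have h10 : finrank k (LinearMap.ker (μ i)) = 0 := by
      rw [h9] at h8
      have := hper i
      omega
    exact Submodule.finrank_eq_zero.mp h10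
  -- sections and retractions
  have hσ : ∀ i, ∃ σ : ↥(R i) →ₗ[k] X.V i, (θtil i) ∘ₗ σ = LinearMap.id := by
    intro i
    exact (θtil i).exists_rightInverse_of_surjective (LinearMap.range_rangeRestrict _)
  choose σ hσ using hσ
  have hσ' : ∀ i (y : ↥(R i)), θ i (σ i y) = y.1 := by
    intro i y
    have h2 : θtil i (σ i y) = y := LinearMap.ext_iff.mp (hσ i) y
    exact congrArg Subtype.val h2
  have hτ : ∀ i, ∃ τ : Z.V i →ₗ[k] ↥(R i), τ ∘ₗ (μ i) = LinearMap.id := by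
    intro i
    exact (μ i).exists_leftInverse_of_injective (LinearMap.ker_eq_bot.mpr (hμinj i))
  choose τ hτ using hτ
  -- the cocycle ζ
  have hξmem : ∀ (i j : Q₀) (a : i ⟶ j) (y : ↥(R i)),
      ((X.G i j a) ∘ₗ (σ i) - (σ j) ∘ₗ (GI i j a)) y ∈ S j := by
    intro i j a y
    simp only [hSdef, LinearMap.mem_ker, LinearMap.sub_apply, LinearMap.comp_apply, map_sub]
    rw [isHom_apply hθcomm a (σ i y), hσ' i y, hσ' j (GI i j a y)]
    show X.G i j a y.1 - (GI i j a y).1 = 0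
    rw [sub_eq_zero]
    rfl
  set ξ : ∀ (i j : Q₀) (a : i ⟶ j), ↥(R i) →ₗ[k] K.V j := fun i j a =>
    LinearMap.codRestrict (S j) ((X.G i j a) ∘ₗ (σ i) - (σ j) ∘ₗ (GI i j a))
      (hξmem i j a) with hξdef
  set ζ' : ∀ (i j : Q₀) (a : i ⟶ j), ↥(R i) →ₗ[k] Z.V j := fun i j a =>
    (π j) ∘ₗ (ξ i j a) with hζ'def
  set ζ : ∀ (i j : Q₀) (a : i ⟶ j), Z.V i →ₗ[k] Z.V j := fun i j a =>
    (ζ' i j a) ∘ₗ (τ i) with hζdef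
  have hζμ : ∀ (i j : Q₀) (a : i ⟶ j), (ζ i j a) ∘ₗ (μ i) = ζ' i j a := by
    intro i j a
    rw [hζdef]
    rw [LinearMap.comp_assoc, hτ i, LinearMap.comp_id]
  -- ζ is not in the range of Φ
  have hζnotin : (fun i j a => ζ i j a) ∉ LinearMap.range (Phi Z) := by
    rintro ⟨ρ, hρ⟩
    have hρ' : ∀ (i j : Q₀) (a : i ⟶ j),
        (Z.G i j a) ∘ₗ (ρ i) - (ρ j) ∘ₗ (Z.G i j a) = ζ i j a := by
      intro i j a
      exact congrFun (congrFun (congrFun hρ i) j) a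
    set φI : ∀ i, ↥(R i) →ₗ[k] Z.V i := fun i => (ρ i) ∘ₗ (μ i) with hφIdef
    have hstar : ∀ (i j : Q₀) (a : i ⟶ j) (y : ↥(R i)),
        ζ' i j a y = Z.G i j a (φI i y) - φI j (GI i j a y) := by
      intro i j a y
      have h1 : ζ i j a (μ i y) = ζ' i j a y := LinearMap.ext_iff.mp (hζμ i j a) y
      have h2 := LinearMap.ext_iff.mp (hρ' i j a) (μ i y)
      simp only [LinearMap.sub_apply, LinearMap.comp_apply] at h2
      have h3 : Z.G i j a (μ i y) = μ j (GI i j a y) := (isHom_apply hμhom a y).symm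
      rw [← h1, ← h2, h3]
      rfl
    have hκmapmem : ∀ i (x : X.V i),
        ((LinearMap.id : X.V i →ₗ[k] X.V i) - (σ i) ∘ₗ (θtil i)) x ∈ S i := by
      intro i x
      simp only [hSdef, LinearMap.mem_ker, LinearMap.sub_apply, LinearMap.comp_apply,
        LinearMap.id_apply, map_sub]
      rw [hσ' i (θtil i x)]
      show θ i x - (θtil i x).1 = 0
      rw [sub_eq_zero]
      rfl
    set κmap : ∀ i, X.V i →ₗ[k] K.V i := fun i =>
      LinearMap.codRestrict (S i) ((LinearMap.id : X.V i →ₗ[k] X.V i) - (σ i) ∘ₗ (θtil i))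
        (hκmapmem i) with hκmapdef
    set ρhat : ∀ i, X.V i →ₗ[k] Z.V i := fun i => (π i) ∘ₗ (κmap i) + (φI i) ∘ₗ (θtil i)
      with hρhatdef
    have hθtil0 : ∀ i (u : K.V i), θtil i u.1 = 0 := by
      intro i u
      refine Subtype.ext ?_
      show θ i u.1 = 0
      exact u.2
    have hρhatres : ∀ i (u : K.V i), ρhat i u.1 = π i u := by
      intro i u
      show π i (κmap i u.1) + φI i (θtil i u.1) = π i u
      rw [hθtil0 i u, map_zero, add_zero]
      congr 1
      refine Subtype.ext ?_
      show u.1 - σ i (θtil i u.1) = u.1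
      rw [hθtil0 i u, map_zero, sub_zero]
    have hρhathom : IsHom X Z ρhat := by
      intro i j a
      ext x
      have hyG : θtil j (X.G i j a x) = GI i j a (θtil i x) := isHom_apply hθtilhom a x
      have hkey : κmap j (X.G i j a x) - ξ i j a (θtil i x) = K.G i j a (κmap i x) := by
        refine Subtype.ext ?_
        show (X.G i j a x - σ j (θtil j (X.G i j a x)))
            - (X.G i j a (σ i (θtil i x)) - σ j (GI i j a (θtil i x)))
            = X.G i j a (x - σ i (θtil i x))
        rw [hyG, map_sub]
        abel
      have h4 : φI j (GI i j a (θtil i x)) = Z.G i j a (φI i (θtil i x))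
          - ζ' i j a (θtil i x) := by
        rw [hstar i j a (θtil i x)]
        abel
      have h5 : π j (κmap j (X.G i j a x)) - ζ' i j a (θtil i x)
          = Z.G i j a (π i (κmap i x)) := by
        have h6 := congrArg (π j) hkey
        rw [map_sub] at h6
        have h7 : ζ' i j a (θtil i x) = π j (ξ i j a (θtil i x)) := rfl
        rw [h7, h6]
        exact isHom_apply hπhom a (κmap i x)
      show π j (κmap j (X.G i j a x)) + φI j (θtil j (X.G i j a x))
          = Z.G i j a (π i (κmap i x) + φI i (θtil i x))
      rw [hyG, h4, map_add, ← h5]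
      abel
    set η : ∀ i, X.V i →ₗ[k] X.V i := fun i =>
      ((S i).subtype) ∘ₗ ((ι i) ∘ₗ (ρhat i)) with hηdef
    have hηcomm : X.Comm η := isHom_comp (isHom_comp hρhathom hιhom) hsubhom
    have hηidem : ∀ i, (η i) ∘ₗ (η i) = η i := by
      intro i
      ext x
      have h8 : η i x = ((ι i) (ρhat i x)).1 := rfl
      have h9 : ρhat i (((ι i) (ρhat i x)).1) = π i ((ι i) (ρhat i x)) := hρhatres i _
      show ((ι i) (ρhat i (η i x))).1 = ((ι i) (ρhat i x)).1
      rw [h8, h9, hπι]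
    rcases hind η hηcomm hηidem with h0 | h1
    · -- η = 0 contradicts Z being nonzero
      set zz := π i₂ (θhat i₂ x₂) with hzzdef
      have hzz1 : η i₂ ((zz.1).1) = (zz.1).1 := by
        show ((ι i₂) (ρhat i₂ ((zz.1).1))).1 = (zz.1).1
        rw [hρhatres i₂ zz.1]
        have h10 : π i₂ (zz.1) = zz := hπι i₂ zz
        rw [h10]
        rfl
      have hzz0 : (zz.1).1 ≠ 0 := fun h => hx₂ (Subtype.ext h)
      apply hzz0
      rw [← hzz1, h0 i₂, LinearMap.zero_apply]
    · -- η = id contradicts θ iθ ≠ 0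
      apply hiθ
      ext x
      have hmem : η iθ x ∈ S iθ := ((ι iθ) (ρhat iθ x)).2
      rw [h1 iθ, LinearMap.id_apply] at hmem
      exact LinearMap.mem_ker.mp hmem
  -- apply the dimension count
  exact brick_contradiction hdynkin Z i₂ hZnt
    (fun ρ hρ => ih Z.dim hZdim Z le_rfl hZind ρ hρ) _ hζnotin

end Key

end Rep

end Stmt14Aux

open Module

/-- Gabriel: Let `Q` be a Dynkin quiver (a finite quiver whose underlying
graph is a Dynkin diagram of type `A`, `D` or `E`; equivalently, whose Tits form
`q(d) = Σᵢ dᵢ² − Σ_{α : i → j} dᵢdⱼ` is positive definite) over an algebraically closed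
field `k`, and let `Y` be an indecomposable finite-dimensional representation of `Q`
(equivalently, an indecomposable module over the path algebra `kQ`). Then every
endomorphism of `Y` is a scalar multiple of the identity: `End(Y) = k·1_Y`. -/
theorem stmt14 {k : Type} [Field k] [IsAlgClosed k]
    (Q₀ : Type) [Fintype Q₀] [Quiver Q₀] [∀ a b : Q₀, Fintype (a ⟶ b)]
    -- the Tits form of the quiver is positive definite (Dynkin condition)
    (hdynkin : ∀ d : Q₀ → ℤ, d ≠ 0 →
      0 < (∑ i : Q₀, d i ^ 2)
        - ∑ i : Q₀, ∑ j : Q₀, (Fintype.card (i ⟶ j) : ℤ) * d i * d j)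
    -- a finite-dimensional representation `Y` of `Q`:
    (Y : Q₀ → Type)
    [∀ i, AddCommGroup (Y i)] [∀ i, Module k (Y i)] [∀ i, FiniteDimensional k (Y i)]
    (F : ∀ {i j : Q₀}, (i ⟶ j) → (Y i →ₗ[k] Y j))
    -- `Y` is nonzero:
    (hY : ∃ i, Nontrivial (Y i))
    -- `Y` is indecomposable: the only idempotent endomorphisms are `0` and `1`
    (hind : ∀ φ : ∀ i, Y i →ₗ[k] Y i,
      (∀ (i j : Q₀) (a : i ⟶ j), (φ j).comp (F a) = (F a).comp (φ i)) →
      (∀ i, (φ i).comp (φ i) = φ i) →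
      (∀ i, φ i = 0) ∨ (∀ i, φ i = LinearMap.id)) :
    -- every endomorphism of `Y` is a scalar multiple of the identity
    ∀ φ : ∀ i, Y i →ₗ[k] Y i,
      (∀ (i j : Q₀) (a : i ⟶ j), (φ j).comp (F a) = (F a).comp (φ i)) →
      ∃ c : k, ∀ i, φ i = c • LinearMap.id := by
  intro φ hφ
  let X : Stmt14Aux.Rep k Q₀ :=
    { V := Y
      acg := fun i => inferInstance
      mod := fun i => inferInstance
      fd := fun i => inferInstance
      G := fun i j a => F a }
  exact Stmt14Aux.Rep.key hdynkin X.dim X le_rfl hind φ hφ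
end
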